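/- Diagonal PTDF entries (Corollary 1, part 2): If G is connected, then for each edge l = (i, j) ∈ E, the diagonal PTDF entry D_{ll} := B_l (A_{ii} + A_{jj} − A_{ij} − A_{ji}) satisfies D_{ll} = 1 − (Σ_{F ∈ T_{−l}} β(F)) / (Σ_{F ∈ T_E} β(F)), where T_{−l} is the set of spanning trees of G not containing l. Consequently, D_{ll} = 1 if l is a bridge of G, and 0 < D_{ll} < 1 otherwise. -/

import Mathlib

open Matrix Finset

variable {n m : ℕ}

/-- Nodes `a` and `b` are joined by some edge in the edge set `S`. -/
def edgeAdj (src tgt : Fin m → Fin (n + 1)) (S : Finset (Fin m)) (a b : Fin (n + 1)) : Prop :=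
  ∃ e ∈ S, (src e = a ∧ tgt e = b) ∨ (src e = b ∧ tgt e = a)

/-- The spanning subgraph with edge set `S` is connected. -/
def ConnectedOn (src tgt : Fin m → Fin (n + 1)) (S : Finset (Fin m)) : Prop :=
  ∀ a b : Fin (n + 1), Relation.ReflTransGen (edgeAdj src tgt S) a b

/-- `F` is the edge set of a spanning tree of the graph on `n + 1` nodes
(a connected spanning subgraph with exactly `n` edges). -/
def IsSpanningTree (src tgt : Fin m → Fin (n + 1)) (F : Finset (Fin m)) : Prop :=
  F.card = n ∧ ConnectedOn src tgt F

/-- Connectivity within the vertex set `V`, using only edges of `S` traversed inside `V`. -/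
def ConnWithin (src tgt : Fin m → Fin (n + 1)) (S : Finset (Fin m))
    (V : Finset (Fin (n + 1))) : Prop :=
  ∀ a ∈ V, ∀ b ∈ V,
    Relation.ReflTransGen (fun x y => x ∈ V ∧ y ∈ V ∧ edgeAdj src tgt S x y) a b

/-- `F` is a spanning forest of exactly two vertex-disjoint trees, one containing all
nodes in `N1` and the other containing all nodes in `N2`. -/
def IsSpanningForest2 (src tgt : Fin m → Fin (n + 1)) (F : Finset (Fin m))
    (N1 N2 : Finset (Fin (n + 1))) : Prop :=
  ∃ V1 V2 : Finset (Fin (n + 1)),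
    Disjoint V1 V2 ∧ V1 ∪ V2 = Finset.univ ∧ V1.Nonempty ∧ V2.Nonempty ∧
      N1 ⊆ V1 ∧ N2 ⊆ V2 ∧ F.card + 1 = n ∧
      (∀ e ∈ F, (src e ∈ V1 ∧ tgt e ∈ V1) ∨ (src e ∈ V2 ∧ tgt e ∈ V2)) ∧
      ConnWithin src tgt F V1 ∧ ConnWithin src tgt F V2

/-- The (signed) incidence matrix `C`. -/
def incMat (src tgt : Fin m → Fin (n + 1)) : Matrix (Fin (n + 1)) (Fin m) ℝ :=
  Matrix.of fun i e => if src e = i then 1 else if tgt e = i then -1 else 0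

/-- The weighted Laplacian `L = C ⬝ diag B ⬝ Cᵀ`. -/
noncomputable def lap (src tgt : Fin m → Fin (n + 1)) (B : Fin m → ℝ) :
    Matrix (Fin (n + 1)) (Fin (n + 1)) ℝ :=
  incMat src tgt * Matrix.diagonal B * (incMat src tgt)ᵀ

/-- The reduced Laplacian: delete the row and column of the reference node `Fin.last n`. -/
noncomputable def rlap (src tgt : Fin m → Fin (n + 1)) (B : Fin m → ℝ) :
    Matrix (Fin n) (Fin n) ℝ :=
  (lap src tgt B).submatrix Fin.castSucc Fin.castSucc

/-- The inverse of the reduced Laplacian, padded with a zero row and column at the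
reference node. -/
noncomputable def Amat (src tgt : Fin m → Fin (n + 1)) (B : Fin m → ℝ) :
    Matrix (Fin (n + 1)) (Fin (n + 1)) ℝ :=
  Matrix.of fun i j =>
    if hi : i = Fin.last n then 0
    else if hj : j = Fin.last n then 0
    else (rlap src tgt B)⁻¹ (i.castPred hi) (j.castPred hj)

open Classical in
/-- `Σ_{F ∈ T_E} β(F)`: total weight of all spanning trees. -/
noncomputable def treeSum (src tgt : Fin m → Fin (n + 1)) (B : Fin m → ℝ) : ℝ :=
  ∑ F ∈ Finset.univ.filter (fun F => IsSpanningTree src tgt F), ∏ e ∈ F, B e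

open Classical in
/-- `Σ_{F ∈ T_{−l}} β(F)`: total weight of all spanning trees avoiding the edge `l`. -/
noncomputable def treeSumAvoiding (src tgt : Fin m → Fin (n + 1)) (B : Fin m → ℝ)
    (l : Fin m) : ℝ :=
  ∑ F ∈ Finset.univ.filter (fun F => IsSpanningTree src tgt F ∧ l ∉ F), ∏ e ∈ F, B e

open Classical in
/-- `Σ_{F ∈ T(N1, N2)} β(F)`: total weight of two-tree spanning forests separating
`N1` from `N2`. -/
noncomputable def forestSum (src tgt : Fin m → Fin (n + 1)) (B : Fin m → ℝ)
    (N1 N2 : Finset (Fin (n + 1))) : ℝ :=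
  ∑ F ∈ Finset.univ.filter (fun F => IsSpanningForest2 src tgt F N1 N2), ∏ e ∈ F, B e

/-- The power transfer distribution factor `D_{l, î ĵ}`. -/
noncomputable def ptdf (src tgt : Fin m → Fin (n + 1)) (B : Fin m → ℝ) (l : Fin m)
    (ihat jhat : Fin (n + 1)) : ℝ :=
  B l * (Amat src tgt B (src l) ihat + Amat src tgt B (tgt l) jhat
    - Amat src tgt B (src l) jhat - Amat src tgt B (tgt l) ihat)

/-- An edge is a bridge if its removal disconnects the graph. -/
def IsBridge (src tgt : Fin m → Fin (n + 1)) (l : Fin m) : Prop :=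
  ¬ ConnectedOn src tgt (Finset.univ.erase l)

/-- There is a simple cycle (distinct edges, distinct vertices) containing both edges
`l` and `lhat`. -/
def ExistsSimpleCycleThrough (src tgt : Fin m → Fin (n + 1)) (l lhat : Fin m) : Prop :=
  ∃ (k : ℕ) (es : Fin (k + 2) → Fin m) (vs : Fin (k + 2) → Fin (n + 1)),
    Function.Injective es ∧ Function.Injective vs ∧
      (∀ t, (src (es t) = vs t ∧ tgt (es t) = vs (t + 1)) ∨
        (src (es t) = vs (t + 1) ∧ tgt (es t) = vs t)) ∧
      (∃ t, es t = l) ∧ (∃ t, es t = lhat)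

/-- The incidence submatrix `C_{−F}` on the surviving edges. -/
def Cminus (src tgt : Fin m → Fin (n + 1)) (F : Finset (Fin m)) :
    Matrix (Fin (n + 1)) {e : Fin m // e ∉ F} ℝ :=
  (incMat src tgt).submatrix id (fun e => e.val)

/-- The incidence submatrix `C_F` on the removed edges. -/
def Cof (src tgt : Fin m → Fin (n + 1)) (F : Finset (Fin m)) :
    Matrix (Fin (n + 1)) {e : Fin m // e ∈ F} ℝ :=
  (incMat src tgt).submatrix id (fun e => e.val)

/-- The diagonal susceptance submatrix `B_{−F}` on the surviving edges. -/
noncomputable def Bminus (B : Fin m → ℝ) (F : Finset (Fin m)) :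
    Matrix {e : Fin m // e ∉ F} {e : Fin m // e ∉ F} ℝ :=
  Matrix.diagonal fun e => B e.val

/-- The diagonal susceptance submatrix `B_F` on the removed edges. -/
noncomputable def Bof (B : Fin m → ℝ) (F : Finset (Fin m)) :
    Matrix {e : Fin m // e ∈ F} {e : Fin m // e ∈ F} ℝ :=
  Matrix.diagonal fun e => B e.val

/-- The post-contingency Laplacian `L_{−F} = C_{−F} ⬝ B_{−F} ⬝ C_{−F}ᵀ`. -/
noncomputable def lapMinus (src tgt : Fin m → Fin (n + 1)) (B : Fin m → ℝ)
    (F : Finset (Fin m)) : Matrix (Fin (n + 1)) (Fin (n + 1)) ℝ :=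
  Cminus src tgt F * Bminus B F * (Cminus src tgt F)ᵀ

/-- The padded inverse `A_{−F}` of the post-contingency reduced Laplacian. -/
noncomputable def AmatMinus (src tgt : Fin m → Fin (n + 1)) (B : Fin m → ℝ)
    (F : Finset (Fin m)) : Matrix (Fin (n + 1)) (Fin (n + 1)) ℝ :=
  Matrix.of fun i j =>
    if hi : i = Fin.last n then 0
    else if hj : j = Fin.last n then 0
    else ((lapMinus src tgt B F).submatrix Fin.castSucc Fin.castSucc)⁻¹
      (i.castPred hi) (j.castPred hj)

/-- The pre-contingency branch flow vector `f = diag(B) ⬝ Cᵀ ⬝ A ⬝ p`. -/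
noncomputable def flowPre (src tgt : Fin m → Fin (n + 1)) (B : Fin m → ℝ)
    (p : Fin (n + 1) → ℝ) : Fin m → ℝ :=
  (Matrix.diagonal B * (incMat src tgt)ᵀ * Amat src tgt B) *ᵥ p

/-- The post-contingency branch flow vector `f̃_{−F} = B_{−F} ⬝ C_{−F}ᵀ ⬝ A_{−F} ⬝ p`
on the surviving edges. -/
noncomputable def flowPost (src tgt : Fin m → Fin (n + 1)) (B : Fin m → ℝ)
    (F : Finset (Fin m)) (p : Fin (n + 1) → ℝ) : {e : Fin m // e ∉ F} → ℝ :=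
  (Bminus B F * (Cminus src tgt F)ᵀ * AmatMinus src tgt B F) *ᵥ p

/-- The generalized line outage distribution factor matrix
`K^F = B_{−F} ⬝ C_{−F}ᵀ ⬝ A_{−F} ⬝ C_F`. -/
noncomputable def glodf (src tgt : Fin m → Fin (n + 1)) (B : Fin m → ℝ)
    (F : Finset (Fin m)) : Matrix {e : Fin m // e ∉ F} {e : Fin m // e ∈ F} ℝ :=
  Bminus B F * (Cminus src tgt F)ᵀ * AmatMinus src tgt B F * Cof src tgt F

/-- The PTDF submatrix `D_{FF} = B_F ⬝ C_Fᵀ ⬝ A ⬝ C_F`. -/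
noncomputable def Dff (src tgt : Fin m → Fin (n + 1)) (B : Fin m → ℝ)
    (F : Finset (Fin m)) : Matrix {e : Fin m // e ∈ F} {e : Fin m // e ∈ F} ℝ :=
  Bof B F * (Cof src tgt F)ᵀ * Amat src tgt B * Cof src tgt F

/-- The PTDF submatrix `D_{−FF} = B_{−F} ⬝ C_{−F}ᵀ ⬝ A ⬝ C_F`. -/
noncomputable def DmFF (src tgt : Fin m → Fin (n + 1)) (B : Fin m → ℝ)
    (F : Finset (Fin m)) : Matrix {e : Fin m // e ∉ F} {e : Fin m // e ∈ F} ℝ :=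
  Bminus B F * (Cminus src tgt F)ᵀ * Amat src tgt B * Cof src tgt F

/-!
Write `L̄` for the reduced Laplacian and `c` for the column of `l` in the reduced incidence
matrix `C̄`, so that `D_ll = B_l cᵀ L̄⁻¹ c`. Setting `B_l` to zero turns `L̄` into the reduced
Laplacian `L̄₋ₗ = L̄ - B_l c cᵀ` of `G - l`, so by the matrix determinant lemma
`det L̄₋ₗ = det L̄ · (1 - D_ll)`. By the matrix-tree theorem both determinants are weighted tree
sums: Cauchy–Binet expands `det (C̄ diag(B) C̄ᵀ)` over `n`-edge sets `F`, and the minor of `C̄`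
on `F` is `±1` if `F` is a spanning tree and `0` otherwise, because the incidence matrix is
totally unimodular and the minor vanishes exactly when some nonconstant potential is constant
along every edge of `F`. Finally `L̄` is positive definite, which gives `D_ll > 0`, and `L̄₋ₗ`
is positive definite unless `l` is a bridge, in which case no spanning tree avoids `l`.
-/

theorem Finset.exists_perm_orderEmbOfFin_comp_eq {ι : Type*} [LinearOrder ι] {k : ℕ}
    (F : Finset ι) (h : F.card = k)
    {p : Fin k → ι} (hp : p.Injective) (himage : univ.image p = F) :
    ∃ τ : Equiv.Perm (Fin k), ⇑(F.orderEmbOfFin h) ∘ τ = p := by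
  have hmem : ∀ i, p i ∈ F := fun i => himage ▸ mem_image_of_mem p (mem_univ i)
  let τ : Fin k → Fin k := fun i => (F.orderIsoOfFin h).symm ⟨p i, hmem i⟩
  have hτ : ∀ i, F.orderEmbOfFin h (τ i) = p i := fun i => by
    simp [τ, ← coe_orderIsoOfFin_apply]
  have hinj : τ.Injective := fun i j hij => hp (by rw [← hτ, ← hτ, hij])
  exact ⟨Equiv.ofBijective τ (Finite.injective_iff_bijective.mp hinj), funext hτ⟩

namespace Matrix

variable {R ι : Type*} [CommRing R] {k : ℕ}

def leibnizTerm (M : Matrix (Fin k) ι R) (N : Matrix ι (Fin k) R) (p : Fin k → ι) : R :=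
  ∑ σ : Equiv.Perm (Fin k), (Equiv.Perm.sign σ : R) * ∏ i, M (σ i) (p i) * N (p i) i

theorem leibnizTerm_eq_zero_of_not_injective (M : Matrix (Fin k) ι R)
    (N : Matrix ι (Fin k) R) {p : Fin k → ι} (hp : ¬ p.Injective) :
    leibnizTerm M N p = 0 := by
  obtain ⟨i, j, hpij, hij⟩ := Function.not_injective_iff.mp hp
  refine Finset.sum_involution (fun σ _ => σ * Equiv.swap i j) (fun σ _ => ?_)
    (fun σ _ _ => (not_congr Equiv.mul_swap_eq_iff).mpr hij) (fun _ _ => mem_univ _)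
    (fun σ _ => Equiv.mul_swap_involutive i j σ)
  have : ∏ x, M (σ x) (p x) = ∏ x, M ((σ * Equiv.swap i j) x) (p x) :=
    Fintype.prod_equiv (Equiv.swap i j) _ _ (by simp [Equiv.apply_swap_eq_self hpij])
  simp [this, Equiv.Perm.sign_swap hij, prod_mul_distrib]

theorem det_mul_eq_sum_leibnizTerm [Fintype ι] [DecidableEq ι] (M : Matrix (Fin k) ι R)
    (N : Matrix ι (Fin k) R) :
    (M * N).det = ∑ p : Fin k → ι with p.Injective, leibnizTerm M N p := by
  rw [sum_filter_of_ne fun p _ h =>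
    by_contra fun hp => h (leibnizTerm_eq_zero_of_not_injective M N hp)]
  simp only [leibnizTerm, det_apply', mul_apply, prod_univ_sum, mul_sum, Fintype.piFinset_univ]
  exact sum_comm

theorem det_mul_det_eq_sum_leibnizTerm_perm (P Q : Matrix (Fin k) (Fin k) R) :
    P.det * Q.det = ∑ τ : Equiv.Perm (Fin k), leibnizTerm P Q τ := by
  rw [← det_mul, det_mul_eq_sum_leibnizTerm]
  refine sum_bij' (fun p hp => Equiv.ofBijective p (Finite.injective_iff_bijective.mp
    (mem_filter.mp hp).2)) (fun τ _ => τ) (fun _ _ => mem_univ _)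
    (fun τ _ => mem_filter.mpr ⟨mem_univ _, τ.injective⟩) (fun _ _ => rfl)
    (fun _ _ => Equiv.ext fun _ => rfl) (fun _ _ => rfl)

theorem sum_leibnizTerm_image_eq [Fintype ι] [LinearOrder ι] (M : Matrix (Fin k) ι R)
    (N : Matrix ι (Fin k) R) (F : Finset ι) (h : F.card = k) :
    ∑ p : Fin k → ι with p.Injective ∧ univ.image p = F, leibnizTerm M N p
      = (M.submatrix id (F.orderEmbOfFin h)).det * (N.submatrix (F.orderEmbOfFin h) id).det := by
  rw [det_mul_det_eq_sum_leibnizTerm_perm]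
  symm
  refine sum_bij (fun τ _ => F.orderEmbOfFin h ∘ τ) (fun τ _ => ?_)
    (fun τ₁ _ τ₂ _ hτ => Equiv.ext fun i => (F.orderEmbOfFin h).injective (congrFun hτ i))
    (fun p hp => ?_) (fun _ _ => rfl)
  · refine mem_filter.mpr ⟨mem_univ _, (F.orderEmbOfFin h).injective.comp τ.injective, ?_⟩
    rw [← image_image, image_univ_equiv, image_orderEmbOfFin_univ]
  · obtain ⟨-, hinj, himage⟩ := mem_filter.mp hp
    obtain ⟨τ, hτ⟩ := F.exists_perm_orderEmbOfFin_comp_eq h hinj himage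
    exact ⟨τ, mem_univ _, hτ⟩

theorem det_mul_eq_sum_det_mul_det [Fintype ι] [LinearOrder ι] (M : Matrix (Fin k) ι R)
    (N : Matrix ι (Fin k) R) :
    (M * N).det = ∑ F : Finset ι, if h : F.card = k then
      (M.submatrix id (F.orderEmbOfFin h)).det * (N.submatrix (F.orderEmbOfFin h) id).det
      else 0 := by
  rw [det_mul_eq_sum_leibnizTerm,
    ← sum_fiberwise (univ.filter fun p : Fin k → ι => p.Injective) (fun p => univ.image p)]
  refine sum_congr rfl fun F _ => ?_
  rw [filter_filter]
  split_ifs with h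
  · exact sum_leibnizTerm_image_eq M N F h
  · refine sum_eq_zero fun p hp => absurd ?_ h
    obtain ⟨-, hinj, rfl⟩ := mem_filter.mp hp
    rw [card_image_of_injective _ hinj, card_univ, Fintype.card_fin]

theorem det_add_vecMulVec [Fintype ι] [DecidableEq ι] {A : Matrix ι ι R} (hA : IsUnit A.det)
    (u v : ι → R) :
    (A + vecMulVec u v).det = A.det * (1 + v ⬝ᵥ (A⁻¹ *ᵥ u)) := by
  rw [vecMulVec_eq Unit, det_add_replicateCol_mul_replicateRow hA, dotProduct_mulVec]
  congr 1
  simp [det_unique, mul_apply, vecMul, dotProduct]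

end Matrix

section Incidence

variable {src tgt : Fin m → Fin (n + 1)}

theorem incMat_apply_eq_sub (hsimple : ∀ e, src e ≠ tgt e) (a : Fin (n + 1)) (e : Fin m) :
    incMat src tgt a e = (if src e = a then 1 else 0) - (if tgt e = a then 1 else 0) := by
  by_cases hs : src e = a
  · simp [incMat, hs, show tgt e ≠ a from hs ▸ (hsimple e).symm]
  · by_cases ht : tgt e = a <;> simp [incMat, hs, ht]

theorem incMat_mem_range_signType (a : Fin (n + 1)) (e : Fin m) :
    incMat src tgt a e ∈ Set.range SignType.cast := by
  simp only [incMat, of_apply]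
  split_ifs
  exacts [⟨1, by simp⟩, ⟨-1, by simp⟩, ⟨0, by simp⟩]

theorem sum_mul_incMat (hsimple : ∀ e, src e ≠ tgt e) (e : Fin m) (y : Fin (n + 1) → ℝ) :
    ∑ a, y a * incMat src tgt a e = y (src e) - y (tgt e) := by
  simp [incMat_apply_eq_sub hsimple, mul_sub, sum_sub_distrib]

theorem exists_forall_ne_incMat_eq_zero (hsimple : ∀ e, src e ≠ tgt e) {ι : Type*}
    [Nonempty ι] {f : ι → Fin (n + 1)} (hf : f.Injective) {e : Fin m}
    (he : (∃ i, f i = src e) → ∀ i, f i ≠ tgt e) :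
    ∃ i₀, ∀ i ≠ i₀, incMat src tgt (f i) e = 0 := by
  by_cases hs : ∃ i, f i = src e
  · obtain ⟨i₀, hi₀⟩ := hs
    refine ⟨i₀, fun i hi => ?_⟩
    simp [incMat_apply_eq_sub hsimple, ← hi₀, hf.eq_iff, hi.symm, (he ⟨i₀, hi₀⟩ i).symm]
  push Not at hs
  by_cases ht : ∃ i, f i = tgt e
  · obtain ⟨i₀, hi₀⟩ := ht
    refine ⟨i₀, fun i hi => ?_⟩
    simp [incMat_apply_eq_sub hsimple, ← hi₀, hf.eq_iff, hi.symm, (hs i).symm]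
  push Not at ht
  exact ⟨Classical.arbitrary ι, fun i _ => by
    simp [incMat_apply_eq_sub hsimple, (hs i).symm, (ht i).symm]⟩

theorem isTotallyUnimodular_incMat (hsimple : ∀ e, src e ≠ tgt e) :
    (incMat src tgt).IsTotallyUnimodular := by
  intro k
  induction k with
  | zero => exact fun _ _ _ _ => ⟨1, by simp⟩
  | succ k ih =>
    intro f g hf hg
    by_cases hboth : ∀ j, (∃ i, f i = src (g j)) ∧ ∃ i, f i = tgt (g j)
    · -- every column has one entry `1` and one entry `-1`, so the rows sum to zero
      refine ⟨0, (exists_vecMul_eq_zero_iff.mp ⟨fun _ => 1, one_ne_zero, ?_⟩).symm⟩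
      funext j
      obtain ⟨⟨i, hi⟩, ⟨i', hi'⟩⟩ := hboth j
      simp [vecMul, dotProduct, incMat_apply_eq_sub hsimple, sum_sub_distrib, ← hi, ← hi',
        hf.eq_iff]
    · -- some column has at most one nonzero entry: expand along it
      push Not at hboth
      obtain ⟨j, hj⟩ := hboth
      obtain ⟨i₀, hi₀⟩ := exists_forall_ne_incMat_eq_zero hsimple hf hj
      rw [det_succ_column _ j, Fintype.sum_eq_single i₀ fun i hi => by simp [hi₀ i hi]]
      have hneg : (-1 : ℝ) ∈ MonoidHom.mrange SignType.castHom.toMonoidHom := ⟨-1, by simp⟩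
      change _ ∈ MonoidHom.mrange SignType.castHom.toMonoidHom
      refine mul_mem (mul_mem (pow_mem hneg _) (incMat_mem_range_signType _ _)) ?_
      exact ih _ _ (hf.comp Fin.succAbove_right_injective) (hg.comp Fin.succAbove_right_injective)

theorem eq_of_reflTransGen_edgeAdj {α : Type*} {S : Finset (Fin m)} {v : Fin (n + 1) → α}
    (hv : ∀ e ∈ S, v (src e) = v (tgt e)) {a b : Fin (n + 1)}
    (hab : Relation.ReflTransGen (edgeAdj src tgt S) a b) : v a = v b := by
  induction hab with
  | refl => rfl
  | tail _ hstep ih =>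
    obtain ⟨e, he, ⟨rfl, rfl⟩ | ⟨rfl, rfl⟩⟩ := hstep
    exacts [ih.trans (hv e he), ih.trans (hv e he).symm]

theorem connectedOn_iff_forall_potential {S : Finset (Fin m)} :
    ConnectedOn src tgt S ↔
      ∀ v : Fin (n + 1) → ℝ, (∀ e ∈ S, v (src e) = v (tgt e)) → ∀ a b, v a = v b := by
  classical
  refine ⟨fun hS v hv a b => eq_of_reflTransGen_edgeAdj hv (hS a b), fun h a b => ?_⟩
  -- the indicator of the nodes reachable from `a` is a potential
  let reach : Fin (n + 1) → ℝ :=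
    fun x => if Relation.ReflTransGen (edgeAdj src tgt S) a x then 1 else 0
  have hreach : ∀ e ∈ S, reach (src e) = reach (tgt e) := fun e he => by
    have hst : edgeAdj src tgt S (src e) (tgt e) := ⟨e, he, .inl ⟨rfl, rfl⟩⟩
    have hts : edgeAdj src tgt S (tgt e) (src e) := ⟨e, he, .inr ⟨rfl, rfl⟩⟩
    simp only [reach]
    congr 1
    exact propext ⟨fun hx => hx.tail hst, fun hx => hx.tail hts⟩
  by_contra hab
  simpa [reach, hab, Relation.ReflTransGen.refl] using h reach hreach a b

variable (src tgt) in
def redInc : Matrix (Fin n) (Fin m) ℝ :=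
  (incMat src tgt).submatrix Fin.castSucc id

theorem vecMul_redInc (hsimple : ∀ e, src e ≠ tgt e) (u : Fin (n + 1) → ℝ) :
    (fun i => u i.castSucc - u (Fin.last n)) ᵥ* redInc src tgt
      = fun e => u (src e) - u (tgt e) := by
  funext e
  have h := sum_mul_incMat hsimple e (fun a => u a - u (Fin.last n))
  simp only [Fin.sum_univ_castSucc, sub_self, zero_mul, add_zero, sub_sub_sub_cancel_right] at h
  simpa only [vecMul, dotProduct, redInc, submatrix_apply, id] using h

theorem det_submatrix_redInc_ne_zero_iff (hsimple : ∀ e, src e ≠ tgt e) {F : Finset (Fin m)}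
    (h : F.card = n) :
    ((redInc src tgt).submatrix id (F.orderEmbOfFin h)).det ≠ 0 ↔ ConnectedOn src tgt F := by
  have hker : ∀ u : Fin (n + 1) → ℝ,
      (fun i => u i.castSucc - u (Fin.last n)) ᵥ* (redInc src tgt).submatrix id
        (F.orderEmbOfFin h) = 0 ↔ ∀ e ∈ F, u (src e) = u (tgt e) := fun u => by
    simp only [funext_iff, Pi.zero_apply]
    change (∀ j, ((fun i => u i.castSucc - u (Fin.last n)) ᵥ* redInc src tgt)
      (F.orderEmbOfFin h j) = 0) ↔ _
    simp only [vecMul_redInc hsimple, sub_eq_zero]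
    refine ⟨fun H e he => ?_, fun H j => H _ (F.orderEmbOfFin_mem h j)⟩
    obtain ⟨j, rfl⟩ : e ∈ Set.range (F.orderEmbOfFin h) := by rwa [range_orderEmbOfFin]
    exact H j
  rw [connectedOn_iff_forall_potential, Ne, ← exists_vecMul_eq_zero_iff, not_exists]
  constructor
  · intro hdet v hv
    have hv_last : ∀ a, v a = v (Fin.last n) := by
      by_contra! ⟨a, ha⟩
      refine hdet _ ⟨fun h0 => ?_, (hker v).mpr hv⟩
      induction a using Fin.lastCases with
      | last => exact ha rfl
      | cast i => exact ha (sub_eq_zero.mp (congrFun h0 i))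
    exact fun a b => (hv_last a).trans (hv_last b).symm
  · rintro hconn x ⟨hx, hxM⟩
    let u : Fin (n + 1) → ℝ := Fin.snoc x 0
    have hxu : (fun i => u i.castSucc - u (Fin.last n)) = x := by simp [u]
    rw [← hxu] at hxM
    have hu := hconn u ((hker u).mp hxM)
    exact hx (funext fun i => by simpa [u] using hu i.castSucc (Fin.last n))

theorem redInc_col_ne_zero (hsimple : ∀ e, src e ≠ tgt e) (l : Fin m) :
    (fun i => redInc src tgt i l) ≠ 0 := by
  intro h0
  obtain hs | ht : src l ≠ Fin.last n ∨ tgt l ≠ Fin.last n := by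
    by_contra! h
    exact hsimple l (h.1.trans h.2.symm)
  · simpa [redInc, incMat] using congrFun h0 ((src l).castPred hs)
  · simpa [redInc, incMat, hsimple l] using congrFun h0 ((tgt l).castPred ht)

open Classical in
theorem sq_det_submatrix_redInc (hsimple : ∀ e, src e ≠ tgt e) {F : Finset (Fin m)}
    (h : F.card = n) :
    ((redInc src tgt).submatrix id (F.orderEmbOfFin h)).det ^ 2
      = if ConnectedOn src tgt F then 1 else 0 := by
  have hTU : (redInc src tgt).IsTotallyUnimodular :=
    (isTotallyUnimodular_incMat hsimple).submatrix _ _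
  obtain ⟨s, hs⟩ := (isTotallyUnimodular_iff _).mp hTU n id (F.orderEmbOfFin h)
  rw [← det_submatrix_redInc_ne_zero_iff hsimple h, ← hs]
  cases s <;> simp

theorem rlap_eq_redInc_mul (B : Fin m → ℝ) :
    rlap src tgt B = redInc src tgt * diagonal B * (redInc src tgt)ᵀ := by
  ext i j
  simp [rlap, lap, redInc, mul_apply]

open Classical in
theorem det_rlap_eq_treeSum (hsimple : ∀ e, src e ≠ tgt e) (B : Fin m → ℝ) :
    (rlap src tgt B).det = treeSum src tgt B := by
  rw [rlap_eq_redInc_mul, Matrix.mul_assoc, det_mul_eq_sum_det_mul_det, treeSum, sum_filter]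
  refine sum_congr rfl fun F _ => ?_
  by_cases hcard : F.card = n
  · set C := (redInc src tgt).submatrix id (F.orderEmbOfFin hcard)
    have hfactor : (diagonal B * (redInc src tgt)ᵀ).submatrix (F.orderEmbOfFin hcard) id
        = diagonal (fun i => B (F.orderEmbOfFin hcard i)) * Cᵀ := by
      ext i j
      simp [C, diagonal_mul]
    have hprod : ∏ i, B (F.orderEmbOfFin hcard i) = ∏ e ∈ F, B e := by
      rw [← prod_image (fun i _ j _ hij => (F.orderEmbOfFin hcard).injective hij),
        image_orderEmbOfFin_univ]
    rw [dif_pos hcard, hfactor, det_mul, det_diagonal, det_transpose, hprod,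
      mul_left_comm, ← sq, sq_det_submatrix_redInc hsimple hcard, IsSpanningTree]
    simp [hcard]
  · simp [IsSpanningTree, hcard]

theorem dotProduct_rlap_mulVec (hsimple : ∀ e, src e ≠ tgt e) (B : Fin m → ℝ)
    (u : Fin (n + 1) → ℝ) :
    (fun i => u i.castSucc - u (Fin.last n)) ⬝ᵥ
        (rlap src tgt B *ᵥ fun i => u i.castSucc - u (Fin.last n))
      = ∑ e, B e * (u (src e) - u (tgt e)) ^ 2 := by
  rw [rlap_eq_redInc_mul, ← mulVec_mulVec, ← mulVec_mulVec, dotProduct_mulVec,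
    mulVec_transpose, vecMul_redInc hsimple]
  simp [dotProduct, mulVec_diagonal, sq, mul_left_comm]

theorem rlap_posDef (hsimple : ∀ e, src e ≠ tgt e) {B : Fin m → ℝ} (hB : ∀ e, 0 ≤ B e)
    {S : Finset (Fin m)} (hBS : ∀ e ∈ S, 0 < B e) (hS : ConnectedOn src tgt S) :
    (rlap src tgt B).PosDef := by
  refine .of_dotProduct_mulVec_pos ?_ fun x hx => ?_
  · rw [rlap_eq_redInc_mul, ← conjTranspose_eq_transpose_of_trivial]
    exact isHermitian_mul_mul_conjTranspose _ (isHermitian_diagonal B)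
  · let u : Fin (n + 1) → ℝ := Fin.snoc x 0
    have hxu : (fun i => u i.castSucc - u (Fin.last n)) = x := by simp [u]
    rw [star_trivial, ← hxu, dotProduct_rlap_mulVec hsimple]
    refine lt_of_le_of_ne (sum_nonneg fun e _ => mul_nonneg (hB e) (sq_nonneg _)) fun h0 => ?_
    -- a vanishing form makes `u` a potential on the connected `S`, hence zero
    have hpot : ∀ e ∈ S, u (src e) = u (tgt e) := fun e he => by
      have := (sum_eq_zero_iff_of_nonneg fun e _ => mul_nonneg (hB e) (sq_nonneg _)).mp
        h0.symm e (mem_univ e)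
      simpa [(hBS e he).ne', sub_eq_zero] using this
    exact hx (funext fun i => by
      simpa [u] using connectedOn_iff_forall_potential.mp hS u hpot i.castSucc (Fin.last n))

theorem rlap_update (B : Fin m → ℝ) (l : Fin m) (x : ℝ) :
    rlap src tgt (Function.update B l x) = rlap src tgt B
      + vecMulVec ((x - B l) • fun i => redInc src tgt i l) (fun i => redInc src tgt i l) := by
  have hupdate : diagonal (Function.update B l x)
      = diagonal B + diagonal (Pi.single l (x - B l)) := by
    rw [diagonal_add]
    congr 1
    ext e
    by_cases he : e = l <;> simp [he]
  rw [rlap_eq_redInc_mul, rlap_eq_redInc_mul, hupdate, Matrix.mul_add, Matrix.add_mul]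
  congr 1
  ext i j
  simp [mul_apply, vecMulVec_apply, diagonal_apply, Pi.single_apply, mul_comm]

variable (src tgt) in
theorem dotProduct_Amat_mulVec (B : Fin m → ℝ)
    (y z : Fin (n + 1) → ℝ) :
    y ⬝ᵥ (Amat src tgt B *ᵥ z)
      = (fun i => y i.castSucc) ⬝ᵥ ((rlap src tgt B)⁻¹ *ᵥ fun i => z i.castSucc) := by
  simp [dotProduct, mulVec, Fin.sum_univ_castSucc, Amat]

theorem ptdf_self_eq (hsimple : ∀ e, src e ≠ tgt e) (B : Fin m → ℝ) (l : Fin m) :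
    ptdf src tgt B l (src l) (tgt l)
      = B l * ((fun i => redInc src tgt i l) ⬝ᵥ
          ((rlap src tgt B)⁻¹ *ᵥ fun i => redInc src tgt i l)) := by
  have h := dotProduct_Amat_mulVec src tgt B (fun a => incMat src tgt a l)
    (fun a => incMat src tgt a l)
  rw [dotProduct_comm] at h
  simp only [dotProduct, mulVec, sum_mul_incMat hsimple] at h
  simp only [ptdf, redInc, dotProduct, mulVec, submatrix_apply, id, ← h]
  ring

open Classical in
theorem treeSum_update_zero (B : Fin m → ℝ) (l : Fin m) :
    treeSum src tgt (Function.update B l 0) = treeSumAvoiding src tgt B l := by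
  symm
  rw [treeSumAvoiding, treeSum, ← filter_filter, sum_filter]
  refine sum_congr rfl fun F _ => ?_
  split_ifs with hl
  · exact (prod_eq_zero hl (Function.update_self l 0 B)).symm
  · exact prod_congr rfl fun e he =>
      (Function.update_of_ne (ne_of_mem_of_not_mem he hl) _ _).symm

theorem treeSumAvoiding_eq_treeSum_mul (hsimple : ∀ e, src e ≠ tgt e) {B : Fin m → ℝ}
    (hL : IsUnit (rlap src tgt B).det) (l : Fin m) :
    treeSumAvoiding src tgt B l
      = treeSum src tgt B * (1 - ptdf src tgt B l (src l) (tgt l)) := by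
  rw [← treeSum_update_zero, ← det_rlap_eq_treeSum hsimple, ← det_rlap_eq_treeSum hsimple,
    rlap_update, det_add_vecMulVec hL, ptdf_self_eq hsimple]
  simp only [mulVec_smul, dotProduct_smul, smul_eq_mul]
  ring

open Classical in
theorem treeSumAvoiding_eq_zero_of_isBridge {l : Fin m} (B : Fin m → ℝ)
    (hl : IsBridge src tgt l) : treeSumAvoiding src tgt B l = 0 := by
  refine sum_eq_zero fun F hF => absurd ?_ hl
  obtain ⟨-, ⟨-, hconn⟩, hlF⟩ := mem_filter.mp hF
  refine fun a b => Relation.ReflTransGen.mono (p := edgeAdj src tgt (univ.erase l))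
    (fun x y ⟨e, he, hxy⟩ => ⟨e, ?_, hxy⟩) a b (hconn a b)
  exact mem_erase.mpr ⟨ne_of_mem_of_not_mem he hlF, mem_univ e⟩

theorem treeSum_pos (hsimple : ∀ e, src e ≠ tgt e) {B : Fin m → ℝ} (hB : ∀ e, 0 < B e)
    (hconn : ConnectedOn src tgt univ) : 0 < treeSum src tgt B := by
  rw [← det_rlap_eq_treeSum hsimple]
  exact (rlap_posDef hsimple (fun e => (hB e).le) (fun e _ => hB e) hconn).det_pos

theorem treeSumAvoiding_pos_of_not_isBridge (hsimple : ∀ e, src e ≠ tgt e) {B : Fin m → ℝ}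
    (hB : ∀ e, 0 < B e) {l : Fin m} (hl : ¬ IsBridge src tgt l) :
    0 < treeSumAvoiding src tgt B l := by
  rw [← treeSum_update_zero, ← det_rlap_eq_treeSum hsimple]
  refine (rlap_posDef hsimple (S := univ.erase l) (fun e => ?_) (fun e he => ?_)
    (not_not.mp hl)).det_pos
  · by_cases he : e = l <;> simp [he, (hB e).le]
  · simp [Function.update_of_ne (ne_of_mem_erase he), hB e]

theorem ptdf_self_pos (hsimple : ∀ e, src e ≠ tgt e) {B : Fin m → ℝ} (hB : ∀ e, 0 < B e)
    (hconn : ConnectedOn src tgt univ) (l : Fin m) : 0 < ptdf src tgt B l (src l) (tgt l) := by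
  have hL := rlap_posDef hsimple (fun e => (hB e).le) (fun e _ => hB e) hconn
  rw [ptdf_self_eq hsimple]
  refine mul_pos (hB l) ?_
  simpa using hL.inv.dotProduct_mulVec_pos (redInc_col_ne_zero hsimple l)

end Incidence

/-- **Diagonal PTDF entries, Corollary 1 part 2.**
For a connected graph and each edge `l`, the diagonal PTDF entry `D_{ll}` equals
`1 − (Σ_{F ∈ T_{−l}} β(F)) / (Σ_{F ∈ T_E} β(F))`; consequently `D_{ll} = 1` if `l` is a
bridge, and `0 < D_{ll} < 1` otherwise. -/
theorem diagonal_ptdf_entries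
    (src tgt : Fin m → Fin (n + 1)) (B : Fin m → ℝ)
    (hB : ∀ e, 0 < B e)
    (hsimple : ∀ e, src e ≠ tgt e)
    (hconn : ConnectedOn src tgt Finset.univ)
    (l : Fin m) :
    ptdf src tgt B l (src l) (tgt l)
        = 1 - treeSumAvoiding src tgt B l / treeSum src tgt B
      ∧ (IsBridge src tgt l → ptdf src tgt B l (src l) (tgt l) = 1)
      ∧ (¬ IsBridge src tgt l →
          0 < ptdf src tgt B l (src l) (tgt l)
            ∧ ptdf src tgt B l (src l) (tgt l) < 1) := by
  have hT := treeSum_pos hsimple hB hconn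
  have hunit : IsUnit (rlap src tgt B).det := by
    rw [det_rlap_eq_treeSum hsimple]
    exact hT.ne'.isUnit
  have hD : ptdf src tgt B l (src l) (tgt l)
      = 1 - treeSumAvoiding src tgt B l / treeSum src tgt B := by
    rw [treeSumAvoiding_eq_treeSum_mul hsimple hunit, mul_div_cancel_left₀ _ hT.ne']
    ring
  refine ⟨hD, fun hl => ?_, fun hl => ⟨ptdf_self_pos hsimple hB hconn l, ?_⟩⟩
  · rw [hD, treeSumAvoiding_eq_zero_of_isBridge B hl, zero_div, sub_zero]
  · rw [hD, sub_lt_self_iff]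
    exact div_pos (treeSumAvoiding_pos_of_not_isBridge hsimple hB hl) hT
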